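/- Every formula of arrow update model logic (modal logic extended with arrow update modalities [U,o]) is semantically equivalent to a formula of basic multi-agent modal logic. -/

import Mathlib

namespace AAUML

/-- Formulas of arbitrary arrow update model logic over atoms `P` and agents `A`.
An arrow update model is encoded as a finite list of arrows
`(agent, source outcome, source condition, target outcome, target condition)`,
with outcomes drawn from `ℕ`; `upd U o φ` is `[U,o]φ` and `all φ` is `[↑]φ`. -/
inductive Form (P A : Type) : Type where
  | atom : P → Form P A
  | neg  : Form P A → Form P A
  | and  : Form P A → Form P A → Form P A
  | box  : A → Form P A → Form P A
  | upd  : List (A × ℕ × Form P A × ℕ × Form P A) → ℕ → Form P A → Form P A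
  | all  : Form P A → Form P A

/-- An arrow: agent, source outcome, source condition, target outcome, target condition. -/
abbrev Arrow (P A : Type) := A × ℕ × Form P A × ℕ × Form P A

/-- Formulas of basic multi-agent modal logic: no update modality, no quantifier. -/
inductive Form.Modal {P A : Type} : Form P A → Prop
  | atom (p : P) : Form.Modal (.atom p)
  | neg {φ : Form P A} : Form.Modal φ → Form.Modal (.neg φ)
  | and {φ ψ : Form P A} : Form.Modal φ → Form.Modal ψ → Form.Modal (.and φ ψ)
  | box (a : A) {φ : Form P A} : Form.Modal φ → Form.Modal (.box a φ)

/-- Formulas of arrow update model logic (no arbitrary-update quantifier anywhere,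
including inside the conditions of arrow update models). -/
inductive Form.NoQuant {P A : Type} : Form P A → Prop
  | atom (p : P) : Form.NoQuant (.atom p)
  | neg {φ : Form P A} : Form.NoQuant φ → Form.NoQuant (.neg φ)
  | and {φ ψ : Form P A} : Form.NoQuant φ → Form.NoQuant ψ → Form.NoQuant (.and φ ψ)
  | box (a : A) {φ : Form P A} : Form.NoQuant φ → Form.NoQuant (.box a φ)
  | upd {U : List (Arrow P A)} (o : ℕ) {φ : Form P A} : Form.NoQuant φ →
      (∀ ar ∈ U, Form.NoQuant ar.2.2.1) → (∀ ar ∈ U, Form.NoQuant ar.2.2.2.2) →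
      Form.NoQuant (.upd U o φ)

/-- Propositional formulas (no modalities at all). -/
inductive Form.Prp {P A : Type} : Form P A → Prop
  | atom (p : P) : Form.Prp (.atom p)
  | neg {φ : Form P A} : Form.Prp φ → Form.Prp (.neg φ)
  | and {φ ψ : Form P A} : Form.Prp φ → Form.Prp ψ → Form.Prp (.and φ ψ)

/-- A relational (Kripke) model. -/
structure KModel (P A : Type) : Type 1 where
  World : Type
  R : A → World → World → Prop
  V : World → P → Prop

variable {P A : Type}

/-- Satisfaction for basic modal formulas (junk value `False` on updates/quantifiers;
only used on modal formulas). -/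
def msat (M : KModel P A) : M.World → Form P A → Prop
  | s, .atom p => M.V s p
  | s, .neg φ => ¬ msat M s φ
  | s, .and φ ψ => msat M s φ ∧ msat M s ψ
  | s, .box a φ => ∀ t, M.R a s t → msat M t φ
  | _, .upd _ _ _ => False
  | _, .all _ => False

/-- Some arrow of `U` for agent `a` from outcome `o` to outcome `o'` has its (modal)
source condition true at `s` and its target condition true at `s'`. -/
def marrowOK (M : KModel P A) (U : List (Arrow P A)) (a : A) (o o' : ℕ)
    (s s' : M.World) : Prop :=
  ∃ ψ ψ', (a, o, ψ, o', ψ') ∈ U ∧ msat M s ψ ∧ msat M s' ψ'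

/-- All source and target conditions of `U` are basic modal formulas. -/
def ModalArrows (U : List (Arrow P A)) : Prop :=
  ∀ ar ∈ U, Form.Modal ar.2.2.1 ∧ Form.Modal ar.2.2.2.2

mutual
  /-- Satisfaction `M,s ⊨ φ`.  The case `upd U o φ` is interpreted in the product
  model `M*U` (inlined); `all φ` quantifies over all arrow update models with basic
  modal source and target conditions. -/
  def Form.sat : (M : KModel P A) → M.World → Form P A → Prop
    | M, s, .atom p => M.V s p
    | M, s, .neg φ => ¬ Form.sat M s φ
    | M, s, .and φ ψ => Form.sat M s φ ∧ Form.sat M s ψ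
    | M, s, .box a φ => ∀ t, M.R a s t → Form.sat M t φ
    | M, s, .upd U o φ =>
        Form.sat ⟨M.World × ℕ,
          fun a x y => M.R a x.1 y.1 ∧ satList M U a x.2 y.2 x.1 y.1,
          fun x p => M.V x.1 p⟩ (s, o) φ
    | M, s, .all φ => ∀ (U : List (Arrow P A)) (o : ℕ), ModalArrows U →
        Form.sat ⟨M.World × ℕ,
          fun a x y => M.R a x.1 y.1 ∧ marrowOK M U a x.2 y.2 x.1 y.1,
          fun x p => M.V x.1 p⟩ (s, o) φ
  termination_by M s φ => sizeOf φ

  /-- Some arrow of the list, for agent `a`, from `o` to `o'`, has its source condition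
  true at `s` and its target condition true at `s'`. -/
  def satList : (M : KModel P A) → List (Arrow P A) → A → ℕ → ℕ → M.World → M.World → Prop
    | _, [], _, _, _, _, _ => False
    | M, (b, o1, ψ, o2, ψ') :: rest, a, o, o', s, s' =>
        (b = a ∧ o1 = o ∧ o2 = o' ∧ Form.sat M s ψ ∧ Form.sat M s' ψ') ∨
        satList M rest a o o' s s'
  termination_by M U a o o' s s' => sizeOf U
end

/-- The product `M*U` of a relational model and an arrow update model. -/
def prodModel (M : KModel P A) (U : List (Arrow P A)) : KModel P A :=
  ⟨M.World × ℕ,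
   fun a x y => M.R a x.1 y.1 ∧ satList M U a x.2 y.2 x.1 y.1,
   fun x p => M.V x.1 p⟩

def Valid (φ : Form P A) : Prop := ∀ (M : KModel P A) (s : M.World), Form.sat M s φ

def Form.or (φ ψ : Form P A) : Form P A := .neg (.and (.neg φ) (.neg ψ))
def Form.imp (φ ψ : Form P A) : Form P A := .neg (.and φ (.neg ψ))
def Form.dia (a : A) (φ : Form P A) : Form P A := .neg (.box a (.neg φ))
/-- `⟨U,o⟩φ` -/
def Form.diaUpd (U : List (Arrow P A)) (o : ℕ) (φ : Form P A) : Form P A :=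
  .neg (.upd U o (.neg φ))
/-- `⟨↑⟩φ` -/
def Form.ex (φ : Form P A) : Form P A := .neg (.all (.neg φ))
/-- A canonical tautology. -/
def Form.top [Inhabited P] : Form P A := .neg (.and (.atom default) (.neg (.atom default)))
/-- Finite conjunction. -/
def Form.conj [Inhabited P] : List (Form P A) → Form P A
  | [] => Form.top
  | φ :: rest => .and φ (Form.conj rest)

/-- `Z` is a bisimulation between `M` and `N`. -/
def IsBisim (M N : KModel P A) (Z : M.World → N.World → Prop) : Prop :=
  ∀ s s', Z s s' →
    (∀ p, M.V s p ↔ N.V s' p) ∧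
    (∀ a t, M.R a s t → ∃ t', N.R a s' t' ∧ Z t t') ∧
    (∀ a t', N.R a s' t' → ∃ t, M.R a s t ∧ Z t t')

/-- Bisimilarity of pointed models. -/
def Bisimilar (M : KModel P A) (s : M.World) (N : KModel P A) (s' : N.World) : Prop :=
  ∃ Z, IsBisim M N Z ∧ Z s s'

/-- An action model: actions with accessibility relations and preconditions. -/
structure AModel (P A : Type) : Type 1 where
  Action : Type
  rel : A → Action → Action → Prop
  pre : Action → Form P A

/-- The restricted modal product `M ⊗ E`. -/
def actProd (M : KModel P A) (E : AModel P A) : KModel P A :=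
  ⟨{x : M.World × E.Action // Form.sat M x.1 (E.pre x.2)},
   fun a x y => M.R a x.1.1 y.1.1 ∧ E.rel a x.1.2 y.1.2,
   fun x p => M.V x.1.1 p⟩

/-- `M,s ⊨ [E,e]φ`: if the precondition of `e` holds at `s` then `φ` holds at `(s,e)`
in `M ⊗ E`. -/
def actSat (M : KModel P A) (E : AModel P A) (s : M.World) (e : E.Action)
    (φ : Form P A) : Prop :=
  ∀ h : Form.sat M s (E.pre e), Form.sat (actProd M E) ⟨(s, e), h⟩ φ

/-!
Proof idea: the reduction axioms
`[U,o]p ↔ p`, `[U,o]¬φ ↔ ¬[U,o]φ`, `[U,o](φ ∧ ψ) ↔ [U,o]φ ∧ [U,o]ψ` and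
`[U,o]□_a φ ↔ ⋀_{(o,χ) →_a (o',χ') ∈ U} (χ → □_a(χ' → [U,o']φ))`
push an update with modal conditions inwards through a modal body until it disappears.
An arbitrary formula is then translated bottom-up: once the body and all arrow conditions
of `[U,o]φ` have been replaced by modal equivalents, the product model is unchanged and
the reduction applies.
-/

variable {P A : Type}

section Semantics

variable (M : KModel P A) (s : M.World)

@[simp] lemma sat_atom (p : P) : Form.sat M s (.atom p) ↔ M.V s p := by rw [Form.sat]

@[simp] lemma sat_neg (φ : Form P A) : Form.sat M s (.neg φ) ↔ ¬ Form.sat M s φ := by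
  rw [Form.sat]

@[simp] lemma sat_and (φ ψ : Form P A) :
    Form.sat M s (.and φ ψ) ↔ Form.sat M s φ ∧ Form.sat M s ψ := by
  rw [Form.sat]

@[simp] lemma sat_box (a : A) (φ : Form P A) :
    Form.sat M s (.box a φ) ↔ ∀ t, M.R a s t → Form.sat M t φ := by
  rw [Form.sat]

lemma sat_upd (U : List (Arrow P A)) (o : ℕ) (φ : Form P A) :
    Form.sat M s (.upd U o φ) ↔ Form.sat (prodModel M U) (s, o) φ := by
  rw [Form.sat]; rfl

@[simp] lemma sat_imp (φ ψ : Form P A) :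
    Form.sat M s (φ.imp ψ) ↔ (Form.sat M s φ → Form.sat M s ψ) := by
  simp [Form.imp]

lemma sat_foldr_and (τ : Form P A) (L : List (Form P A)) :
    Form.sat M s (L.foldr .and τ) ↔ (∀ χ ∈ L, Form.sat M s χ) ∧ Form.sat M s τ := by
  induction L with
  | nil => simp
  | cons χ L ih => simp [ih, and_assoc]

lemma satList_iff (U : List (Arrow P A)) (a : A) (o o' : ℕ) (t : M.World) :
    satList M U a o o' s t ↔
      ∃ χ χ', (a, o, χ, o', χ') ∈ U ∧ Form.sat M s χ ∧ Form.sat M t χ' := by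
  induction U with
  | nil => simp [satList]
  | cons ar U ih =>
    obtain ⟨b, o₁, ψ, o₂, ψ'⟩ := ar
    rw [satList, ih]
    aesop

lemma sat_upd_congr {U U' : List (Arrow P A)}
    (h : ∀ a o o' s t, satList M U a o o' s t ↔ satList M U' a o o' s t) (o : ℕ) (φ : Form P A) :
    Form.sat M s (.upd U o φ) ↔ Form.sat M s (.upd U' o φ) := by
  have hR : (fun a (x y : M.World × ℕ) => M.R a x.1 y.1 ∧ satList M U a x.2 y.2 x.1 y.1) =
      fun a x y => M.R a x.1 y.1 ∧ satList M U' a x.2 y.2 x.1 y.1 := by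
    simp only [h]
  rw [Form.sat, Form.sat, hR]

end Semantics

lemma Form.Modal.imp {φ ψ : Form P A} (hφ : φ.Modal) (hψ : ψ.Modal) : (φ.imp ψ).Modal :=
  .neg (.and hφ (.neg hψ))

lemma Form.Modal.foldr_and {τ : Form P A} {L : List (Form P A)} (hτ : τ.Modal)
    (hL : ∀ χ ∈ L, χ.Modal) : (L.foldr .and τ).Modal := by
  induction L with
  | nil => exact hτ
  | cons χ L ih => exact .and (hL χ (by simp)) (ih fun x hx => hL x (by simp [hx]))

def ModallyDefinable (φ : Form P A) : Prop :=
  ∃ ψ : Form P A, ψ.Modal ∧ ∀ (M : KModel P A) (s : M.World), Form.sat M s φ ↔ Form.sat M s ψ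

namespace ModallyDefinable

variable {φ ψ : Form P A}

lemma of_sat_iff (hψ : ModallyDefinable ψ)
    (he : ∀ (M : KModel P A) (s : M.World), Form.sat M s φ ↔ Form.sat M s ψ) :
    ModallyDefinable φ :=
  let ⟨χ, hχ, heχ⟩ := hψ
  ⟨χ, hχ, fun M s => (he M s).trans (heχ M s)⟩

lemma neg (hφ : ModallyDefinable φ) : ModallyDefinable (.neg φ) :=
  let ⟨χ, hχ, he⟩ := hφ
  ⟨.neg χ, .neg hχ, fun M s => by rw [sat_neg, sat_neg, he]⟩

lemma and (hφ : ModallyDefinable φ) (hψ : ModallyDefinable ψ) : ModallyDefinable (.and φ ψ) :=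
  let ⟨χ₁, hχ₁, he₁⟩ := hφ
  let ⟨χ₂, hχ₂, he₂⟩ := hψ
  ⟨.and χ₁ χ₂, .and hχ₁ hχ₂, fun M s => by rw [sat_and, sat_and, he₁, he₂]⟩

lemma box (a : A) (hφ : ModallyDefinable φ) : ModallyDefinable (.box a φ) :=
  let ⟨χ, hχ, he⟩ := hφ
  ⟨.box a χ, .box a hχ, fun M s => by simp only [sat_box, he]⟩

end ModallyDefinable

section Reduction

variable (M : KModel P A) (s : M.World) (U : List (Arrow P A)) (o : ℕ)

lemma sat_upd_atom (p : P) : Form.sat M s (.upd U o (.atom p)) ↔ Form.sat M s (.atom p) := by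
  rw [sat_upd, sat_atom]; exact sat_atom _ _ p

lemma sat_upd_neg (φ : Form P A) :
    Form.sat M s (.upd U o (.neg φ)) ↔ Form.sat M s (.neg (.upd U o φ)) := by
  rw [sat_upd, sat_neg, sat_upd]; exact sat_neg _ _ φ

lemma sat_upd_and (φ ψ : Form P A) :
    Form.sat M s (.upd U o (.and φ ψ)) ↔
      Form.sat M s (.and (.upd U o φ) (.upd U o ψ)) := by
  rw [sat_upd, sat_and, sat_upd, sat_upd]; exact sat_and _ _ φ ψ

lemma sat_upd_box (a : A) (φ : Form P A) :
    Form.sat M s (.upd U o (.box a φ)) ↔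
      ∀ χ o' χ', (a, o, χ, o', χ') ∈ U → Form.sat M s χ →
        ∀ t, M.R a s t → Form.sat M t χ' → Form.sat M t (.upd U o' φ) := by
  rw [sat_upd, sat_box (prodModel M U) (s, o)]
  simp only [prodModel, Prod.forall, satList_iff, sat_upd]
  aesop

/-- The reduct `⋀_{(o,χ) →_a (o',χ') ∈ U} (χ → □_a(χ' → f o'))` of `[U,o]□_a φ`, where
`f o'` is a modal equivalent of `[U,o']φ`; the empty conjunction is `f o → f o`. -/
noncomputable def boxReduct (a : A) (f : ℕ → Form P A) : Form P A :=
  open Classical in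
  ((U.filter fun ar => ar.1 = a ∧ ar.2.1 = o).map fun ar =>
    ar.2.2.1.imp (.box a (ar.2.2.2.2.imp (f ar.2.2.2.1)))).foldr .and ((f o).imp (f o))

lemma sat_boxReduct (a : A) (f : ℕ → Form P A) :
    Form.sat M s (boxReduct U o a f) ↔
      ∀ χ o' χ', (a, o, χ, o', χ') ∈ U → Form.sat M s χ →
        ∀ t, M.R a s t → Form.sat M t χ' → Form.sat M t (f o') := by
  simp only [boxReduct, sat_foldr_and, List.forall_mem_map, List.mem_filter, decide_eq_true_eq,
    sat_imp, sat_box, Prod.forall, imp_self, and_true]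
  aesop

end Reduction

lemma ModalArrows.modal_boxReduct {U : List (Arrow P A)} (hU : ModalArrows U) (o : ℕ) (a : A)
    {f : ℕ → Form P A} (hf : ∀ o', (f o').Modal) : (boxReduct U o a f).Modal := by
  refine .foldr_and ((hf o).imp (hf o)) fun χ hχ => ?_
  obtain ⟨ar, har, rfl⟩ := List.mem_map.1 hχ
  have hUar := hU ar (List.mem_of_mem_filter har)
  exact hUar.1.imp (.box a (hUar.2.imp (hf _)))

theorem Form.Modal.modallyDefinable_upd {U : List (Arrow P A)} (hU : ModalArrows U)
    {φ : Form P A} (hφ : φ.Modal) (o : ℕ) : ModallyDefinable (.upd U o φ) := by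
  induction hφ generalizing o with
  | atom p => exact ⟨.atom p, .atom p, fun M s => sat_upd_atom M s U o p⟩
  | neg _ ih => exact (ih o).neg.of_sat_iff fun M s => sat_upd_neg M s U o _
  | and _ _ ih₁ ih₂ => exact ((ih₁ o).and (ih₂ o)).of_sat_iff fun M s => sat_upd_and M s U o _ _
  | box a _ ih =>
    choose f hf he using ih
    exact ⟨AAUML.boxReduct U o a f, hU.modal_boxReduct o a hf, fun M s => by
      simp only [sat_upd_box, sat_boxReduct, he]⟩

lemma exists_modalArrows_satList_iff {U : List (Arrow P A)}
    (hsrc : ∀ ar ∈ U, ModallyDefinable ar.2.2.1) (htgt : ∀ ar ∈ U, ModallyDefinable ar.2.2.2.2) :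
    ∃ U' : List (Arrow P A), ModalArrows U' ∧ ∀ (M : KModel P A) a o o' s t,
      satList M U a o o' s t ↔ satList M U' a o o' s t := by
  induction U with
  | nil => exact ⟨[], by simp [ModalArrows], fun _ _ _ _ _ _ => Iff.rfl⟩
  | cons ar U ih =>
    obtain ⟨χ, hχ, heχ⟩ := hsrc ar (by simp)
    obtain ⟨χ', hχ', heχ'⟩ := htgt ar (by simp)
    obtain ⟨U', hU', he⟩ :=
      ih (fun x hx => hsrc x (by simp [hx])) (fun x hx => htgt x (by simp [hx]))
    obtain ⟨b, o₁, ψ, o₂, ψ'⟩ := ar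
    refine ⟨(b, o₁, χ, o₂, χ') :: U', ?_, fun M a o o' s t => ?_⟩
    · rintro x (_ | ⟨_, hx⟩)
      exacts [⟨hχ, hχ'⟩, hU' x hx]
    · rw [satList, satList, he, heχ, heχ']

theorem Form.NoQuant.modallyDefinable {φ : Form P A} (h : φ.NoQuant) : ModallyDefinable φ := by
  induction h with
  | atom p => exact ⟨.atom p, .atom p, fun _ _ => Iff.rfl⟩
  | neg _ ih => exact ih.neg
  | and _ _ ih₁ ih₂ => exact ih₁.and ih₂
  | box a _ ih => exact ih.box a
  | upd o _ _ _ ihφ ihsrc ihtgt =>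
    obtain ⟨ψ, hψ, he⟩ := ihφ
    obtain ⟨U', hU', hUU'⟩ := exists_modalArrows_satList_iff ihsrc ihtgt
    obtain ⟨ρ, hρ, heρ⟩ := hψ.modallyDefinable_upd hU' o
    refine ⟨ρ, hρ, fun M s => ?_⟩
    rw [sat_upd_congr M s (hUU' M), sat_upd, he (prodModel M _) (s, o), ← sat_upd, heρ]

/-- every formula of arrow update model logic is semantically
equivalent to a formula of basic multi-agent modal logic. -/
theorem auml_reduction (P A : Type) (φ : Form P A) (h : φ.NoQuant) :
    ∃ φ' : Form P A, φ'.Modal ∧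
      ∀ (M : KModel P A) (s : M.World), Form.sat M s φ ↔ Form.sat M s φ' :=
  h.modallyDefinable

end AAUML
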